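/- arXiv:2404.05445 — 2 statements merged into one kernel-verified Lean document; each statement's English description precedes it below -/
import Mathlib

section
/- Let E : ℝ^d → ℝ be differentiable, m-strongly convex with L-Lipschitz gradient (0 < m ≤ L). Then for every x ∈ ℝ^d with ‖x‖ ≥ 4‖∇E(0)‖/m, one has ⟨x, ∇E(x)⟩ ≥ ‖∇E(0)‖·‖x‖ + (1/(4L))‖∇E(x)‖² - (1/(2L))‖∇E(0)‖². -/
/-! For a convex function with `L`-Lipschitz gradient, the descent lemma applied to the tilted
function `f - ⟪f' x, ·⟫`, which is minimised at `x`, yields co-coercivity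
`⟪x - y, f' x - f' y⟫ ≥ ‖f' x - f' y‖² / L`. Averaging it with strong monotonicity between `x`
and `0` gives `⟪x, E' x - E' 0⟫ ≥ (m/2)‖x‖² + ‖E' x - E' 0‖²/(2L)`: the first term absorbs
`2‖E' 0‖‖x‖` once `‖x‖ ≥ 4‖E' 0‖/m`, and the second dominates
`‖E' x‖²/(4L) - ‖E' 0‖²/(2L)` because `‖E' x‖² ≤ 2‖E' x - E' 0‖² + 2‖E' 0‖²`. -/

open scoped InnerProductSpace
open Set

lemma sub_le_half_of_hasDerivAt_le_mul {φ φ' : ℝ → ℝ} {C : ℝ}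
    (hφ : ∀ t, HasDerivAt φ (φ' t) t) (hle : ∀ t ∈ Ioo (0 : ℝ) 1, φ' t ≤ C * t) :
    φ 1 - φ 0 ≤ C / 2 := by
  have hderiv (t : ℝ) : HasDerivAt (fun s => φ s - C / 2 * s ^ 2) (φ' t - C * t) t := by
    have hsq : HasDerivAt (fun s => C / 2 * s ^ 2) (C * t) t :=
      ((hasDerivAt_pow 2 t).const_mul (C / 2)).congr_deriv (by ring)
    exact (hφ t).sub hsq
  have hanti : AntitoneOn (fun s => φ s - C / 2 * s ^ 2) (Icc 0 1) :=
    antitoneOn_of_hasDerivWithinAt_nonpos (convex_Icc 0 1)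
      (fun t _ => (hderiv t).continuousAt.continuousWithinAt)
      (fun t _ => (hderiv t).hasDerivWithinAt)
      (fun t ht => by rw [interior_Icc] at ht; linarith [hle t ht])
  have := hanti (left_mem_Icc.2 zero_le_one) (right_mem_Icc.2 zero_le_one) zero_le_one
  simp only at this
  linarith

section Gradient

variable {F : Type*} [NormedAddCommGroup F] [InnerProductSpace ℝ F] [CompleteSpace F]
  {f : F → ℝ} {f' : F → F}

lemma hasDerivAt_comp_add_smul_sub_sub_inner (hf : ∀ x, HasGradientAt f (f' x) x) (a b : F)
    (t : ℝ) :
    HasDerivAt (fun s : ℝ => f (a + s • (b - a)) - s * ⟪f' a, b - a⟫_ℝ)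
      ⟪f' (a + t • (b - a)) - f' a, b - a⟫_ℝ t := by
  have hline : HasDerivAt (fun s : ℝ => a + s • (b - a)) (b - a) t := by
    simpa using ((hasDerivAt_id t).smul_const (b - a)).const_add a
  have hcomp := (hf (a + t • (b - a))).hasFDerivAt.comp_hasDerivAt t hline
  rw [InnerProductSpace.toDual_apply_apply] at hcomp
  rw [inner_sub_left]
  exact hcomp.sub (hasDerivAt_mul_const _)

lemma add_inner_le_of_monotone_gradient (hf : ∀ x, HasGradientAt f (f' x) x)
    (hmono : ∀ x x', 0 ≤ ⟪x - x', f' x - f' x'⟫_ℝ) (a b : F) :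
    f a + ⟪f' a, b - a⟫_ℝ ≤ f b := by
  have hderiv := hasDerivAt_comp_add_smul_sub_sub_inner hf a b
  have hmonoOn := monotoneOn_of_hasDerivWithinAt_nonneg (convex_Icc 0 1)
    (fun t _ => (hderiv t).continuousAt.continuousWithinAt)
    (fun t _ => (hderiv t).hasDerivWithinAt) fun t ht => by
      rw [interior_Icc] at ht
      have h := hmono (a + t • (b - a)) a
      rw [add_sub_cancel_left, real_inner_smul_left, real_inner_comm] at h
      exact nonneg_of_mul_nonneg_right h ht.1
  have := hmonoOn (left_mem_Icc.2 zero_le_one) (right_mem_Icc.2 zero_le_one) zero_le_one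
  simp only [zero_smul, one_smul, add_zero, add_sub_cancel, zero_mul, one_mul, sub_zero] at this
  linarith

lemma le_add_inner_add_of_lipschitz_gradient {L : ℝ} (hf : ∀ x, HasGradientAt f (f' x) x)
    (hlip : ∀ x x', ‖f' x - f' x'‖ ≤ L * ‖x - x'‖) (a b : F) :
    f b ≤ f a + ⟪f' a, b - a⟫_ℝ + L / 2 * ‖b - a‖ ^ 2 := by
  have := sub_le_half_of_hasDerivAt_le_mul (C := L * ‖b - a‖ ^ 2)
    (hasDerivAt_comp_add_smul_sub_sub_inner hf a b) fun t ht => calc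
      ⟪f' (a + t • (b - a)) - f' a, b - a⟫_ℝ
        ≤ ‖f' (a + t • (b - a)) - f' a‖ * ‖b - a‖ := real_inner_le_norm _ _
      _ ≤ L * ‖a + t • (b - a) - a‖ * ‖b - a‖ := by gcongr; exact hlip _ _
      _ = L * ‖b - a‖ ^ 2 * t := by
        rw [add_sub_cancel_left, norm_smul, Real.norm_of_nonneg ht.1.le]; ring
  simp only [zero_smul, one_smul, add_zero, add_sub_cancel, zero_mul, one_mul, sub_zero] at this
  linarith

lemma add_sq_norm_gradient_le_of_gradient_eq_zero {L : ℝ} (hL : 0 < L)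
    (hf : ∀ x, HasGradientAt f (f' x) x) (hmono : ∀ x x', 0 ≤ ⟪x - x', f' x - f' x'⟫_ℝ)
    (hlip : ∀ x x', ‖f' x - f' x'‖ ≤ L * ‖x - x'‖) {x : F} (hx : f' x = 0) (y : F) :
    f x + 1 / (2 * L) * ‖f' y‖ ^ 2 ≤ f y := by
  set w := y - L⁻¹ • f' y
  have hmin : f x ≤ f w := by
    simpa [hx] using add_inner_le_of_monotone_gradient hf hmono x w
  have hdescent := le_add_inner_add_of_lipschitz_gradient hf hlip y w
  have hwy : w - y = -(L⁻¹ • f' y) := by simp [w]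
  rw [hwy, inner_neg_right, real_inner_smul_right, real_inner_self_eq_norm_sq, norm_neg,
    norm_smul, Real.norm_of_nonneg (inv_nonneg.2 hL.le)] at hdescent
  have hcoef : L / 2 * (L⁻¹ * ‖f' y‖) ^ 2 - L⁻¹ * ‖f' y‖ ^ 2 = -(1 / (2 * L) * ‖f' y‖ ^ 2) := by
    field_simp; ring
  linarith

lemma add_inner_add_sq_norm_sub_le {L : ℝ} (hL : 0 < L)
    (hf : ∀ x, HasGradientAt f (f' x) x) (hmono : ∀ x x', 0 ≤ ⟪x - x', f' x - f' x'⟫_ℝ)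
    (hlip : ∀ x x', ‖f' x - f' x'‖ ≤ L * ‖x - x'‖) (x y : F) :
    f x + ⟪f' x, y - x⟫_ℝ + 1 / (2 * L) * ‖f' y - f' x‖ ^ 2 ≤ f y := by
  have htilt (z : F) : HasGradientAt (fun z => f z - ⟪f' x, z⟫_ℝ) (f' z - f' x) z := by
    rw [hasGradientAt_iff_hasFDerivAt, map_sub]
    exact (hf z).hasFDerivAt.sub (InnerProductSpace.toDual ℝ F (f' x)).hasFDerivAt
  have htilt_bound := add_sq_norm_gradient_le_of_gradient_eq_zero hL htilt
    (fun a b => by simpa using hmono a b) (fun a b => by simpa using hlip a b) (sub_self _) y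
  rw [inner_sub_right]
  linarith

lemma inv_mul_sq_norm_sub_le_inner {L : ℝ} (hL : 0 < L)
    (hf : ∀ x, HasGradientAt f (f' x) x) (hmono : ∀ x x', 0 ≤ ⟪x - x', f' x - f' x'⟫_ℝ)
    (hlip : ∀ x x', ‖f' x - f' x'‖ ≤ L * ‖x - x'‖) (x y : F) :
    L⁻¹ * ‖f' x - f' y‖ ^ 2 ≤ ⟪x - y, f' x - f' y⟫_ℝ := by
  have hxy := add_inner_add_sq_norm_sub_le hL hf hmono hlip x y
  have hyx := add_inner_add_sq_norm_sub_le hL hf hmono hlip y x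
  rw [norm_sub_rev] at hxy
  have hinner : ⟪x - y, f' x - f' y⟫_ℝ = -⟪f' x, y - x⟫_ℝ - ⟪f' y, x - y⟫_ℝ := by
    simp only [inner_sub_left, inner_sub_right, real_inner_comm]; ring
  rw [hinner, show L⁻¹ = 2 * (1 / (2 * L)) by field_simp]
  linarith

end Gradient

theorem stmt_2 {d : ℕ} (E : EuclideanSpace ℝ (Fin d) → ℝ)
    (E' : EuclideanSpace ℝ (Fin d) → EuclideanSpace ℝ (Fin d))
    (m L : ℝ) (hm : 0 < m) (hmL : m ≤ L)
    (hgrad : ∀ x, HasGradientAt E (E' x) x)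
    (hstrong : ∀ x x', ⟪x - x', E' x - E' x'⟫_ℝ ≥ m * ‖x - x'‖ ^ 2)
    (hlip : ∀ x x', ‖E' x - E' x'‖ ≤ L * ‖x - x'‖)
    (x : EuclideanSpace ℝ (Fin d)) (hx : ‖x‖ ≥ 4 * ‖E' 0‖ / m) :
    ⟪x, E' x⟫_ℝ ≥ ‖E' 0‖ * ‖x‖ + (1 / (4 * L)) * ‖E' x‖ ^ 2
      - (1 / (2 * L)) * ‖E' 0‖ ^ 2 := by
  have hL : 0 < L := hm.trans_le hmL
  have hmono (a b : EuclideanSpace ℝ (Fin d)) : 0 ≤ ⟪a - b, E' a - E' b⟫_ℝ :=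
    (by positivity : 0 ≤ m * ‖a - b‖ ^ 2).trans (hstrong a b)
  have hcoco := inv_mul_sq_norm_sub_le_inner hL hgrad hmono hlip x 0
  have hstr := hstrong x 0
  rw [sub_zero] at hcoco hstr
  have hfar : 2 * ‖E' 0‖ * ‖x‖ ≤ m / 2 * ‖x‖ ^ 2 := by
    rw [ge_iff_le, div_le_iff₀ hm] at hx
    nlinarith [norm_nonneg x]
  have hcs : -(‖x‖ * ‖E' 0‖) ≤ ⟪x, E' 0⟫_ℝ := (abs_le.1 (abs_real_inner_le_norm x (E' 0))).1
  have hsq : ‖E' x‖ ^ 2 ≤ 2 * (‖E' x - E' 0‖ ^ 2 + ‖E' 0‖ ^ 2) :=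
    (pow_le_pow_left₀ (norm_nonneg _) (norm_le_norm_sub_add _ _) 2).trans add_sq_le
  have hsplit : ⟪x, E' x⟫_ℝ = ⟪x, E' x - E' 0⟫_ℝ + ⟪x, E' 0⟫_ℝ := by
    rw [inner_sub_right]; ring
  rw [hsplit, one_div, one_div, mul_inv, mul_inv]
  linarith [mul_le_mul_of_nonneg_left hsq (inv_nonneg.2 hL.le)]
end

section
/- Let E : ℝ^d → ℝ be differentiable, m-strongly convex with L-Lipschitz gradient (0 < m ≤ L). Then for every x ∈ ℝ^d with ‖x‖ ≤ 4‖∇E(0)‖/m, one has ⟨x, ∇E(x)⟩ ≥ (1/(4L))‖∇E(x)‖² - (4/m + 1/(2L))‖∇E(0)‖². -/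
/-!
Monotonicity of `∇E` puts `E` above its tangent planes, and Lipschitz continuity of `∇E` puts it
below tangent plus `L‖·‖²`. Comparing both bounds at `x - (2L)⁻¹ (∇E x - ∇E y)` gives the
co-coercivity `⟪x - y, ∇E x - ∇E y⟫ ≥ (2L)⁻¹ ‖∇E x - ∇E y‖²`. Take `y = 0`, bound
`⟪x, ∇E 0⟫ ≥ -‖x‖ ‖∇E 0‖ ≥ -(4/m) ‖∇E 0‖²` using the assumption on `‖x‖`, and conclude with
`‖∇E x‖² ≤ 2 ‖∇E x - ∇E 0‖² + 2 ‖∇E 0‖²`.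
-/

open scoped InnerProductSpace

section Gradient

variable {F : Type*} [NormedAddCommGroup F] [InnerProductSpace ℝ F] [CompleteSpace F]
  {E : F → ℝ} {E' : F → F}

lemma HasGradientAt.hasDerivAt_comp_add_smul {g a v : F} {t : ℝ}
    (h : HasGradientAt E g (a + t • v)) : HasDerivAt (fun s : ℝ => E (a + s • v)) ⟪g, v⟫_ℝ t := by
  have hline : HasDerivAt (fun s : ℝ => a + s • v) v t := by
    simpa using ((hasDerivAt_id t).smul_const v).const_add a
  simpa [Function.comp_def] using h.hasFDerivAt.comp_hasDerivAt t hline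

lemma exists_linearization_error_eq_inner (hgrad : ∀ x, HasGradientAt E (E' x) x) (a b : F) :
    ∃ t ∈ Set.Ioo (0 : ℝ) 1,
      E b - E a - ⟪E' a, b - a⟫_ℝ = ⟪E' (a + t • (b - a)) - E' a, b - a⟫_ℝ := by
  set v := b - a
  have hderiv (t : ℝ) : HasDerivAt (fun s : ℝ => E (a + s • v) - s * ⟪E' a, v⟫_ℝ)
      (⟪E' (a + t • v), v⟫_ℝ - ⟪E' a, v⟫_ℝ) t :=
    (hgrad (a + t • v)).hasDerivAt_comp_add_smul.sub (hasDerivAt_mul_const _)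
  obtain ⟨t, ht, hslope⟩ := exists_hasDerivAt_eq_slope _ _ zero_lt_one
    (fun t _ => (hderiv t).continuousAt.continuousWithinAt) (fun t _ => hderiv t)
  refine ⟨t, ht, ?_⟩
  have hb : a + v = b := add_sub_cancel a b
  simp only [one_smul, zero_smul, add_zero, hb, one_mul, zero_mul, sub_zero, div_one] at hslope
  rw [inner_sub_left, hslope]
  ring

lemma add_inner_sub_le_of_inner_sub_nonneg (hgrad : ∀ x, HasGradientAt E (E' x) x)
    (hmono : ∀ x y, 0 ≤ ⟪x - y, E' x - E' y⟫_ℝ) (a b : F) :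
    E a + ⟪E' a, b - a⟫_ℝ ≤ E b := by
  obtain ⟨t, ⟨ht, -⟩, herr⟩ := exists_linearization_error_eq_inner hgrad a b
  have h := hmono (a + t • (b - a)) a
  rw [add_sub_cancel_left, real_inner_smul_left, real_inner_comm] at h
  nlinarith [nonneg_of_mul_nonneg_right h ht]

lemma le_add_inner_sub_add_mul_norm_sq (hgrad : ∀ x, HasGradientAt E (E' x) x) {L : ℝ}
    (hlip : ∀ x y, ‖E' x - E' y‖ ≤ L * ‖x - y‖) (a b : F) :
    E b ≤ E a + ⟪E' a, b - a⟫_ℝ + L * ‖b - a‖ ^ 2 := by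
  obtain ⟨t, ⟨ht₀, ht₁⟩, herr⟩ := exists_linearization_error_eq_inner hgrad a b
  have h := hlip (a + t • (b - a)) a
  rw [add_sub_cancel_left, norm_smul, Real.norm_of_nonneg ht₀.le] at h
  have hLv : 0 ≤ L * ‖b - a‖ := by nlinarith [norm_nonneg (E' (a + t • (b - a)) - E' a)]
  calc E b = E a + ⟪E' a, b - a⟫_ℝ + ⟪E' (a + t • (b - a)) - E' a, b - a⟫_ℝ := by linarith
    _ ≤ E a + ⟪E' a, b - a⟫_ℝ + t * (L * ‖b - a‖) * ‖b - a‖ := by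
      grw [real_inner_le_norm (E' _ - E' a), h]
      linarith
    _ ≤ E a + ⟪E' a, b - a⟫_ℝ + L * ‖b - a‖ ^ 2 := by
      grw [ht₁.le]
      linarith

lemma add_inner_sub_add_mul_norm_sq_sub_le (hgrad : ∀ x, HasGradientAt E (E' x) x)
    (hmono : ∀ x y, 0 ≤ ⟪x - y, E' x - E' y⟫_ℝ) {L : ℝ} (hL : 0 < L)
    (hlip : ∀ x y, ‖E' x - E' y‖ ≤ L * ‖x - y‖) (x y : F) :
    E y + ⟪E' y, x - y⟫_ℝ + 1 / (4 * L) * ‖E' x - E' y‖ ^ 2 ≤ E x := by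
  set g := E' x - E' y
  set c := 1 / (2 * L)
  set b := x - c • g
  have hconvex := add_inner_sub_le_of_inner_sub_nonneg hgrad hmono y b
  have hdescent := le_add_inner_sub_add_mul_norm_sq hgrad hlip x b
  have hby : ⟪E' y, b - y⟫_ℝ = ⟪E' y, x - y⟫_ℝ - c * ⟪E' y, g⟫_ℝ := by
    rw [sub_right_comm, inner_sub_right, real_inner_smul_right]
  have hbx : ⟪E' x, b - x⟫_ℝ = -(c * ⟪E' x, g⟫_ℝ) := by
    rw [sub_sub_cancel_left, inner_neg_right, real_inner_smul_right]
  have hbx_norm : ‖b - x‖ ^ 2 = c ^ 2 * ‖g‖ ^ 2 := by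
    rw [sub_sub_cancel_left, norm_neg, norm_smul, mul_pow, Real.norm_eq_abs, sq_abs]
  have hg : ⟪E' x, g⟫_ℝ - ⟪E' y, g⟫_ℝ = ‖g‖ ^ 2 := by
    rw [← inner_sub_left, real_inner_self_eq_norm_sq]
  have hc : c - L * c ^ 2 = 1 / (4 * L) := by
    simp only [c]
    field_simp
    ring
  rw [hby] at hconvex
  rw [hbx, hbx_norm] at hdescent
  linear_combination hconvex + hdescent - c * hg - ‖g‖ ^ 2 * hc

/-- Co-coercivity of the gradient; the constant is `1 / (2 * L)` rather than the optimal `1 / L`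
because the descent lemma above is stated with `L` instead of `L / 2`. -/
lemma mul_norm_sub_sq_le_inner_sub (hgrad : ∀ x, HasGradientAt E (E' x) x)
    (hmono : ∀ x y, 0 ≤ ⟪x - y, E' x - E' y⟫_ℝ) {L : ℝ} (hL : 0 < L)
    (hlip : ∀ x y, ‖E' x - E' y‖ ≤ L * ‖x - y‖) (x y : F) :
    1 / (2 * L) * ‖E' x - E' y‖ ^ 2 ≤ ⟪x - y, E' x - E' y⟫_ℝ := by
  have hxy := add_inner_sub_add_mul_norm_sq_sub_le hgrad hmono hL hlip x y
  have hyx := add_inner_sub_add_mul_norm_sq_sub_le hgrad hmono hL hlip y x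
  rw [norm_sub_rev] at hyx
  have hinner : ⟪x - y, E' x - E' y⟫_ℝ = -⟪E' x, y - x⟫_ℝ - ⟪E' y, x - y⟫_ℝ := by
    rw [real_inner_comm (E' x - E' y), inner_sub_left, ← neg_sub y x, inner_neg_right]
  have hc : 1 / (2 * L) = 2 * (1 / (4 * L)) := by
    field_simp
    ring
  rw [hinner, hc]
  linarith

end Gradient

theorem stmt_3 {d : ℕ} (E : EuclideanSpace ℝ (Fin d) → ℝ)
    (E' : EuclideanSpace ℝ (Fin d) → EuclideanSpace ℝ (Fin d))
    (m L : ℝ) (hm : 0 < m) (hmL : m ≤ L)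
    (hgrad : ∀ x, HasGradientAt E (E' x) x)
    (hstrong : ∀ x x', ⟪x - x', E' x - E' x'⟫_ℝ ≥ m * ‖x - x'‖ ^ 2)
    (hlip : ∀ x x', ‖E' x - E' x'‖ ≤ L * ‖x - x'‖)
    (x : EuclideanSpace ℝ (Fin d)) (hx : ‖x‖ ≤ 4 * ‖E' 0‖ / m) :
    ⟪x, E' x⟫_ℝ ≥ (1 / (4 * L)) * ‖E' x‖ ^ 2
      - (4 / m + 1 / (2 * L)) * ‖E' 0‖ ^ 2 := by
  have hL : 0 < L := hm.trans_le hmL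
  have hmono (y z : EuclideanSpace ℝ (Fin d)) : 0 ≤ ⟪y - z, E' y - E' z⟫_ℝ :=
    (mul_nonneg hm.le (sq_nonneg _)).trans (hstrong y z)
  have hcoco := mul_norm_sub_sq_le_inner_sub hgrad hmono hL hlip x 0
  rw [sub_zero, inner_sub_right] at hcoco
  have hx0 : -(4 / m * ‖E' 0‖ ^ 2) ≤ ⟪x, E' 0⟫_ℝ :=
    calc -(4 / m * ‖E' 0‖ ^ 2) = -(4 * ‖E' 0‖ / m * ‖E' 0‖) := by ring
      _ ≤ -(‖x‖ * ‖E' 0‖) := by grw [hx]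
      _ ≤ ⟪x, E' 0⟫_ℝ := neg_le_of_abs_le (abs_real_inner_le_norm x (E' 0))
  have hnorm : 1 / (4 * L) * ‖E' x‖ ^ 2
      ≤ 1 / (2 * L) * ‖E' x - E' 0‖ ^ 2 + 1 / (2 * L) * ‖E' 0‖ ^ 2 :=
    calc 1 / (4 * L) * ‖E' x‖ ^ 2 ≤ 1 / (4 * L) * (‖E' x - E' 0‖ + ‖E' 0‖) ^ 2 := by
          grw [norm_le_norm_sub_add (E' x) (E' 0)]
      _ ≤ 1 / (4 * L) * (2 * (‖E' x - E' 0‖ ^ 2 + ‖E' 0‖ ^ 2)) := by grw [add_sq_le]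
      _ = 1 / (2 * L) * ‖E' x - E' 0‖ ^ 2 + 1 / (2 * L) * ‖E' 0‖ ^ 2 := by
          field_simp
          ring
  linarith
end
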